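/- For the INMA(q1,q2) random field and any lag (k,l) with 0 ≤ k ≤ q1 and 0 ≤ l ≤ q2, the autocovariance function satisfies γ(k,l) := Cov(X_{s,t}, X_{s−k,t−l}) = (σ_ε² − μ_ε) · ∑_{i=k}^{q1} ∑_{j=l}^{q2} β_{i,j} β_{i−k,j−l} + μ_ε · ∑_{i=k}^{q1} ∑_{j=l}^{q2} P(Z_{s−i,t−j;1}^{(i,j)} = Z_{s−i,t−j;1}^{(i−k,j−l)} = 1). (Theorem 1(ii).) -/

import Mathlib

/-!
By bilinearity, `γ(k,l)` is the double sum over lags `(i,j)`, `(i',j')` of the covariances of the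
thinnings `β_{ij} ∘ ε_{s-i,t-j}` and `β_{i'j'} ∘ ε_{s-k-i',t-l-j'}`. Conditioning on the
innovations and using that the counting series are independent of them, two thinnings of
different innovations only involve disjoint blocks of independent counting series, hence are
uncorrelated. Two thinnings of the same innovation `N` with components `c, c'` have, given
`N = n`, mixed moment `n P(Z^c = Z^{c'} = 1) + n(n-1) β_c β_{c'}` (diagonal versus off-diagonal
pairs of counting variables), so their covariance is
`μ P(Z^c = Z^{c'} = 1) + (E N(N-1) - μ²) β_c β_{c'} = μ P(Z^c = Z^{c'} = 1) + (σ² - μ) β_c β_{c'}`.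
The innovations coincide exactly when `(i',j') = (i-k, j-l)`.
-/

open MeasureTheory ProbabilityTheory Finset
open scoped ENNReal

section NatValued

variable {Ω : Type*} [MeasurableSpace Ω] {P : Measure Ω}

lemma lintegral_natCast_of_le_one {f : Ω → ℕ} (hf : Measurable f) (h01 : ∀ ω, f ω ≤ 1) :
    ∫⁻ ω, (f ω : ℝ≥0∞) ∂P = P {ω | f ω = 1} := by
  have h : (fun ω => (f ω : ℝ≥0∞)) = {ω | f ω = 1}.indicator 1 := by
    funext ω
    rcases Nat.le_one_iff_eq_zero_or_eq_one.mp (h01 ω) with h | h <;> simp [h]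
  exact h ▸ lintegral_indicator_one (hf (measurableSet_singleton 1))

lemma integral_natCast_eq_toReal_lintegral {f : Ω → ℕ} (hf : Measurable f) :
    ∫ ω, (f ω : ℝ) ∂P = (∫⁻ ω, (f ω : ℝ≥0∞) ∂P).toReal := by
  rw [← integral_toReal (f := fun ω => (f ω : ℝ≥0∞)) (by fun_prop)
    (ae_of_all _ fun _ => ENNReal.natCast_lt_top _)]
  simp

lemma integral_natCast_mul_eq_toReal_lintegral {f g : Ω → ℕ} (hf : Measurable f)
    (hg : Measurable g) :
    ∫ ω, (f ω : ℝ) * g ω ∂P = (∫⁻ ω, (f ω : ℝ≥0∞) * g ω ∂P).toReal := by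
  simpa using integral_natCast_eq_toReal_lintegral (P := P) (f := fun ω => f ω * g ω) (hf.mul hg)

lemma lintegral_natCast_ne_top {f : Ω → ℕ} (hf : Integrable (fun ω => (f ω : ℝ)) P) :
    ∫⁻ ω, (f ω : ℝ≥0∞) ∂P ≠ ⊤ := by
  simpa using hf.lintegral_lt_top.ne

lemma natCast_mul_pred_eq (n : ℕ) : ((n * (n - 1) : ℕ) : ℝ) = (n : ℝ) ^ 2 - n := by
  cases n with
  | zero => simp
  | succ n =>
    simp only [add_tsub_cancel_right, Nat.cast_mul, Nat.cast_add, Nat.cast_one]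
    ring

end NatValued

lemma ProbabilityTheory.IndepFun.lintegral_comp_eq_lintegral_lintegral {Ω α E : Type*}
    [MeasurableSpace Ω] {P : Measure Ω} [IsFiniteMeasure P] [MeasurableSpace α] [Countable α]
    [MeasurableSingletonClass α] [MeasurableSpace E] {N : Ω → α} {G : Ω → E}
    (hN : Measurable N) (hG : Measurable G) (hind : IndepFun N G P) {φ : α → E → ℝ≥0∞}
    (hφ : ∀ a, Measurable (φ a)) :
    ∫⁻ ω, φ (N ω) (G ω) ∂P = ∫⁻ ω, ∫⁻ ω', φ (N ω) (G ω') ∂P ∂P := by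
  have hφ' : Measurable (Function.uncurry φ) :=
    (measurable_from_prod_countable_left (f := fun q : E × α => φ q.2 q.1) hφ).comp
      measurable_swap
  have hmap : P.map (fun ω => (N ω, G ω)) = (P.map N).prod (P.map G) :=
    (indepFun_iff_map_prod_eq_prod_map_map hN.aemeasurable hG.aemeasurable).mp hind
  calc ∫⁻ ω, φ (N ω) (G ω) ∂P
      = ∫⁻ z, Function.uncurry φ z ∂(P.map N).prod (P.map G) := by
        rw [← hmap, lintegral_map hφ' (hN.prodMk hG)]; rfl
    _ = ∫⁻ ω, ∫⁻ ω', φ (N ω) (G ω') ∂P ∂P := by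
        rw [lintegral_prod _ hφ'.aemeasurable, lintegral_map (measurable_of_countable _) hN]
        exact lintegral_congr fun ω => lintegral_map (hφ _) hG

lemma ProbabilityTheory.iIndepFun.indepFun_finsetSum_finsetSum {Ω ι β : Type*}
    [MeasurableSpace Ω] [MeasurableSpace β] {P : Measure Ω} {f : ι → Ω → β} (hf : iIndepFun f P)
    (hmeas : ∀ i, Measurable (f i)) {S T : Finset ι} (hST : Disjoint S T)
    {g g' : ι → β → ℝ≥0∞} (hg : ∀ i, Measurable (g i)) (hg' : ∀ i, Measurable (g' i)) :
    IndepFun (fun ω => ∑ i ∈ S, g i (f i ω)) (fun ω => ∑ i ∈ T, g' i (f i ω)) P := by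
  have h := (hf.indepFun_finset S T hST hmeas).comp
    (φ := fun v : S → β => ∑ i : S, g i (v i)) (ψ := fun v : T → β => ∑ i : T, g' i (v i))
    (Finset.measurable_sum _ fun i _ => (hg i).comp (measurable_pi_apply i))
    (Finset.measurable_sum _ fun i _ => (hg' i).comp (measurable_pi_apply i))
  convert h using 1 <;> funext ω <;> exact (sum_coe_sort _ _).symm

lemma sum_range_sum_range_ite_eq (n : ℕ) (γ c : ℝ≥0∞) :
    ∑ r ∈ range n, ∑ r' ∈ range n, (if r = r' then γ else c)
      = n * γ + ((n * (n - 1) : ℕ) : ℝ≥0∞) * c := by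
  have hrow : ∀ r ∈ range n,
      ∑ r' ∈ range n, (if r = r' then γ else c) = γ + ((n - 1 : ℕ) : ℝ≥0∞) * c := by
    intro r hr
    rw [sum_ite, filter_eq, if_pos hr, filter_ne, sum_const, sum_const, card_erase_of_mem hr]
    simp
  rw [sum_congr rfl hrow, sum_const, card_range, nsmul_eq_mul, Nat.cast_mul]
  ring

section Thinning

variable {Ω κ L : Type*} [MeasurableSpace Ω] {P : Measure Ω}

lemma lintegral_sum_range_natCast {Y : ℕ → Ω → ℕ} (hY : ∀ r, Measurable (Y r)) {b : ℝ≥0∞}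
    (hb : ∀ r, ∫⁻ ω, (Y r ω : ℝ≥0∞) ∂P = b) (n : ℕ) :
    ∫⁻ ω, ∑ r ∈ range n, (Y r ω : ℝ≥0∞) ∂P = n * b := by
  rw [lintegral_finsetSum _ fun r _ => by fun_prop]
  simp [hb]

lemma lintegral_sum_range_mul_sum_range_natCast {Y Y' : ℕ → Ω → ℕ} (hY : ∀ r, Measurable (Y r))
    (hY' : ∀ r, Measurable (Y' r)) (hind : ∀ r r', r ≠ r' → IndepFun (Y r) (Y' r') P)
    {b b' γ : ℝ≥0∞} (hb : ∀ r, ∫⁻ ω, (Y r ω : ℝ≥0∞) ∂P = b)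
    (hb' : ∀ r, ∫⁻ ω, (Y' r ω : ℝ≥0∞) ∂P = b')
    (hγ : ∀ r, ∫⁻ ω, (Y r ω : ℝ≥0∞) * Y' r ω ∂P = γ) (n : ℕ) :
    ∫⁻ ω, (∑ r ∈ range n, (Y r ω : ℝ≥0∞)) * ∑ r ∈ range n, (Y' r ω : ℝ≥0∞) ∂P
      = n * γ + ((n * (n - 1) : ℕ) : ℝ≥0∞) * (b * b') := by
  have hprod : ∀ r r', Measurable fun ω => (Y r ω : ℝ≥0∞) * Y' r' ω := fun r r' => by fun_prop
  have hterm : ∀ r r', ∫⁻ ω, (Y r ω : ℝ≥0∞) * Y' r' ω ∂P = if r = r' then γ else b * b' := by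
    intro r r'
    split_ifs with h
    · exact h ▸ hγ r
    · have hind' : IndepFun (fun ω => (Y r ω : ℝ≥0∞)) (fun ω => (Y' r' ω : ℝ≥0∞)) P :=
        (hind r r' h).comp measurable_from_top measurable_from_top
      rw [lintegral_mul_eq_lintegral_mul_lintegral_of_indepFun'' (by fun_prop) (by fun_prop) hind',
        hb, hb']
  simp_rw [sum_mul_sum]
  rw [lintegral_finsetSum _ fun r _ => Finset.measurable_sum _ fun r' _ => hprod r r']
  simp_rw [lintegral_finsetSum _ fun r' _ => hprod _ r', hterm]
  exact sum_range_sum_range_ite_eq n γ (b * b')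

variable {Z : κ → ℕ → Ω → L → ℕ}

lemma lintegral_sum_range_mul_sum_range_of_ne (hZmeas : ∀ p r, Measurable (Z p r))
    (hZiid : iIndepFun (fun pr : κ × ℕ => Z pr.1 pr.2) P) {p p' : κ} (hpp' : p ≠ p') (c c' : L)
    {b b' : ℝ≥0∞} (hb : ∀ r, ∫⁻ ω, (Z p r ω c : ℝ≥0∞) ∂P = b)
    (hb' : ∀ r, ∫⁻ ω, (Z p' r ω c' : ℝ≥0∞) ∂P = b') (n m : ℕ) :
    ∫⁻ ω, (∑ r ∈ range n, (Z p r ω c : ℝ≥0∞)) * ∑ r ∈ range m, (Z p' r ω c' : ℝ≥0∞) ∂P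
      = (n * b) * (m * b') := by
  have hsum : ∀ (q : κ) (e : L) (N : ℕ) (ω : Ω),
      ∑ x ∈ {q} ×ˢ range N, (Z x.1 x.2 ω e : ℝ≥0∞) = ∑ r ∈ range N, (Z q r ω e : ℝ≥0∞) := by
    intro q e N ω
    rw [sum_product, sum_singleton]
  have hdisj : Disjoint ({p} ×ˢ range n) ({p'} ×ˢ range m) :=
    disjoint_product.mpr (Or.inl (disjoint_singleton.mpr hpp'))
  have hind := hZiid.indepFun_finsetSum_finsetSum (fun x => hZmeas x.1 x.2) hdisj
    (g := fun _ z => (z c : ℝ≥0∞)) (g' := fun _ z => (z c' : ℝ≥0∞))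
    (fun _ => by fun_prop) (fun _ => by fun_prop)
  simp only [hsum] at hind
  rw [lintegral_mul_eq_lintegral_mul_lintegral_of_indepFun'' (by fun_prop) (by fun_prop) hind,
    lintegral_sum_range_natCast (Y := fun r ω => Z p r ω c) (by fun_prop) hb,
    lintegral_sum_range_natCast (Y := fun r ω => Z p' r ω c') (by fun_prop) hb']

/-- The binomial thinning `β_c ∘ ε_p` of the paper, with counting series `(Z p r · c)_r`. -/
def thinning (ε : κ → Ω → ℕ) (Z : κ → ℕ → Ω → L → ℕ) (p : κ) (c : L) (ω : Ω) : ℕ :=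
  ∑ r ∈ range (ε p ω), Z p r ω c

variable {ε : κ → Ω → ℕ}

lemma measurable_thinning {p : κ} (hε : Measurable (ε p)) (hZmeas : ∀ p r, Measurable (Z p r))
    (c : L) : Measurable (thinning ε Z p c) := by
  have hφ : Measurable fun x : (κ × ℕ → L → ℕ) × ℕ => ∑ r ∈ range x.2, x.1 (p, r) c :=
    measurable_from_prod_countable_left fun n => by dsimp only; fun_prop
  exact hφ.comp ((measurable_pi_lambda _ fun pr => hZmeas pr.1 pr.2).prodMk hε)

lemma lintegral_thinning [IsFiniteMeasure P] {p : κ} (hε : Measurable (ε p))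
    (hZmeas : ∀ p r, Measurable (Z p r))
    (hind : IndepFun (ε p) (fun ω (pr : κ × ℕ) => Z pr.1 pr.2 ω) P) {c : L} {b : ℝ≥0∞}
    (hb : ∀ r, ∫⁻ ω, (Z p r ω c : ℝ≥0∞) ∂P = b) :
    ∫⁻ ω, (thinning ε Z p c ω : ℝ≥0∞) ∂P = b * ∫⁻ ω, (ε p ω : ℝ≥0∞) ∂P := by
  calc ∫⁻ ω, (thinning ε Z p c ω : ℝ≥0∞) ∂P
      = ∫⁻ ω, ∫⁻ ω', ∑ r ∈ range (ε p ω), (Z p r ω' c : ℝ≥0∞) ∂P ∂P := by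
        simp only [thinning, Nat.cast_sum]
        exact hind.lintegral_comp_eq_lintegral_lintegral
          (φ := fun n z => ∑ r ∈ range n, (z (p, r) c : ℝ≥0∞)) hε
          (measurable_pi_lambda _ fun pr => hZmeas pr.1 pr.2) fun n => by fun_prop
    _ = ∫⁻ ω, (ε p ω : ℝ≥0∞) * b ∂P := lintegral_congr fun ω =>
        lintegral_sum_range_natCast (Y := fun r ω => Z p r ω c) (by fun_prop) hb _
    _ = b * ∫⁻ ω, (ε p ω : ℝ≥0∞) ∂P := by
        rw [lintegral_mul_const _ (by fun_prop), mul_comm]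

lemma lintegral_thinning_mul_thinning_self [IsFiniteMeasure P] {p : κ} (hε : Measurable (ε p))
    (hZmeas : ∀ p r, Measurable (Z p r)) (hZiid : iIndepFun (fun pr : κ × ℕ => Z pr.1 pr.2) P)
    (hind : IndepFun (ε p) (fun ω (pr : κ × ℕ) => Z pr.1 pr.2 ω) P) {c c' : L}
    {b b' γ : ℝ≥0∞} (hb : ∀ r, ∫⁻ ω, (Z p r ω c : ℝ≥0∞) ∂P = b)
    (hb' : ∀ r, ∫⁻ ω, (Z p r ω c' : ℝ≥0∞) ∂P = b')
    (hγ : ∀ r, ∫⁻ ω, (Z p r ω c : ℝ≥0∞) * Z p r ω c' ∂P = γ) :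
    ∫⁻ ω, (thinning ε Z p c ω : ℝ≥0∞) * thinning ε Z p c' ω ∂P
      = γ * ∫⁻ ω, (ε p ω : ℝ≥0∞) ∂P
        + b * b' * ∫⁻ ω, ((ε p ω * (ε p ω - 1) : ℕ) : ℝ≥0∞) ∂P := by
  have hindZ : ∀ r r', r ≠ r' → IndepFun (fun ω => Z p r ω c) (fun ω => Z p r' ω c') P :=
    fun r r' h => (hZiid.indepFun (i := (p, r)) (j := (p, r')) (by simpa using h)).comp
      (measurable_pi_apply c) (measurable_pi_apply c')
  calc ∫⁻ ω, (thinning ε Z p c ω : ℝ≥0∞) * thinning ε Z p c' ω ∂P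
      = ∫⁻ ω, ∫⁻ ω', (∑ r ∈ range (ε p ω), (Z p r ω' c : ℝ≥0∞))
          * ∑ r ∈ range (ε p ω), (Z p r ω' c' : ℝ≥0∞) ∂P ∂P := by
        simp only [thinning, Nat.cast_sum]
        exact hind.lintegral_comp_eq_lintegral_lintegral
          (φ := fun n z =>
            (∑ r ∈ range n, (z (p, r) c : ℝ≥0∞)) * ∑ r ∈ range n, (z (p, r) c' : ℝ≥0∞))
          hε (measurable_pi_lambda _ fun pr => hZmeas pr.1 pr.2) fun n => by fun_prop
    _ = ∫⁻ ω, (ε p ω : ℝ≥0∞) * γ + ((ε p ω * (ε p ω - 1) : ℕ) : ℝ≥0∞) * (b * b') ∂P :=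
        lintegral_congr fun ω => lintegral_sum_range_mul_sum_range_natCast
          (Y := fun r ω => Z p r ω c) (Y' := fun r ω => Z p r ω c') (by fun_prop) (by fun_prop)
          hindZ hb hb' hγ _
    _ = _ := by
        rw [lintegral_add_left (by fun_prop), lintegral_mul_const _ (by fun_prop),
          lintegral_mul_const _ (by fun_prop)]
        ring

lemma lintegral_thinning_mul_thinning_of_ne [IsFiniteMeasure P] {p p' : κ} (hpp' : p ≠ p')
    (hε : Measurable (ε p)) (hε' : Measurable (ε p')) (hεind : IndepFun (ε p) (ε p') P)
    (hZmeas : ∀ p r, Measurable (Z p r)) (hZiid : iIndepFun (fun pr : κ × ℕ => Z pr.1 pr.2) P)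
    (hind : IndepFun (fun ω => (ε p ω, ε p' ω)) (fun ω (pr : κ × ℕ) => Z pr.1 pr.2 ω) P)
    {c c' : L} {b b' : ℝ≥0∞} (hb : ∀ r, ∫⁻ ω, (Z p r ω c : ℝ≥0∞) ∂P = b)
    (hb' : ∀ r, ∫⁻ ω, (Z p' r ω c' : ℝ≥0∞) ∂P = b') :
    ∫⁻ ω, (thinning ε Z p c ω : ℝ≥0∞) * thinning ε Z p' c' ω ∂P
      = (b * ∫⁻ ω, (ε p ω : ℝ≥0∞) ∂P) * (b' * ∫⁻ ω, (ε p' ω : ℝ≥0∞) ∂P) := by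
  have hεind' : IndepFun (fun ω => (ε p ω : ℝ≥0∞)) (fun ω => (ε p' ω : ℝ≥0∞)) P :=
    hεind.comp measurable_from_top measurable_from_top
  calc ∫⁻ ω, (thinning ε Z p c ω : ℝ≥0∞) * thinning ε Z p' c' ω ∂P
      = ∫⁻ ω, ∫⁻ ω', (∑ r ∈ range (ε p ω), (Z p r ω' c : ℝ≥0∞))
          * ∑ r ∈ range (ε p' ω), (Z p' r ω' c' : ℝ≥0∞) ∂P ∂P := by
        simp only [thinning, Nat.cast_sum]
        exact hind.lintegral_comp_eq_lintegral_lintegral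
          (φ := fun nm z => (∑ r ∈ range nm.1, (z (p, r) c : ℝ≥0∞))
            * ∑ r ∈ range nm.2, (z (p', r) c' : ℝ≥0∞))
          (hε.prodMk hε') (measurable_pi_lambda _ fun pr => hZmeas pr.1 pr.2) fun n => by fun_prop
    _ = ∫⁻ ω, (b * b') * ((ε p ω : ℝ≥0∞) * ε p' ω) ∂P := lintegral_congr fun ω => by
        rw [lintegral_sum_range_mul_sum_range_of_ne hZmeas hZiid hpp' c c' hb hb']
        ring
    _ = _ := by
        rw [lintegral_const_mul _ (by fun_prop),
          lintegral_mul_eq_lintegral_mul_lintegral_of_indepFun'' (by fun_prop) (by fun_prop)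
            hεind']
        ring

end Thinning

section Covariance

variable {Ω κ L : Type*} [MeasurableSpace Ω] {P : Measure Ω} {ε : κ → Ω → ℕ}
  {Z : κ → ℕ → Ω → L → ℕ}

lemma memLp_thinning {p : κ} (hε : Measurable (ε p)) (hZmeas : ∀ p r, Measurable (Z p r))
    (hZ01 : ∀ r ω c, Z p r ω c ≤ 1) (hε2 : MemLp (fun ω => (ε p ω : ℝ)) 2 P) (c : L) :
    MemLp (fun ω => (thinning ε Z p c ω : ℝ)) 2 P := by
  refine hε2.mono (measurable_from_top.comp (measurable_thinning hε hZmeas c)).aestronglyMeasurable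
    (ae_of_all _ fun ω => ?_)
  have h : thinning ε Z p c ω ≤ ε p ω := by
    simpa [thinning] using Finset.sum_le_card_nsmul (range (ε p ω)) _ 1 fun r _ => hZ01 r ω c
  simpa using h

lemma lintegral_natCast_comp_of_identDistrib {p : κ} (hZmeas : ∀ p r, Measurable (Z p r))
    (hZid : ∀ r, IdentDistrib (Z p r) (Z p 0) P P) {g : (L → ℕ) → ℕ} (hg : Measurable g)
    (hg1 : ∀ ω, g (Z p 0 ω) ≤ 1) (r : ℕ) :
    ∫⁻ ω, (g (Z p r ω) : ℝ≥0∞) ∂P = P {ω | g (Z p 0 ω) = 1} :=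
  ((hZid r).comp (measurable_from_top.comp hg)).lintegral_eq.trans
    (lintegral_natCast_of_le_one (hg.comp (hZmeas p 0)) hg1)

lemma integral_thinning [IsFiniteMeasure P] {p : κ} (hε : Measurable (ε p))
    (hZmeas : ∀ p r, Measurable (Z p r)) (hZ01 : ∀ r ω c, Z p r ω c ≤ 1)
    (hZid : ∀ r, IdentDistrib (Z p r) (Z p 0) P P)
    (hind : IndepFun (ε p) (fun ω (pr : κ × ℕ) => Z pr.1 pr.2 ω) P) (c : L) :
    ∫ ω, (thinning ε Z p c ω : ℝ) ∂P = (P {ω | Z p 0 ω c = 1}).toReal * ∫ ω, (ε p ω : ℝ) ∂P := by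
  rw [integral_natCast_eq_toReal_lintegral (measurable_thinning hε hZmeas c),
    lintegral_thinning hε hZmeas hind
      (lintegral_natCast_comp_of_identDistrib hZmeas hZid (measurable_pi_apply c) (hZ01 0 · c)),
    ENNReal.toReal_mul, integral_natCast_eq_toReal_lintegral hε]

lemma covariance_thinning_of_ne [IsProbabilityMeasure P] {p p' : κ} (hpp' : p ≠ p')
    (hε : Measurable (ε p)) (hε' : Measurable (ε p')) (hεind : IndepFun (ε p) (ε p') P)
    (hε2 : MemLp (fun ω => (ε p ω : ℝ)) 2 P) (hε2' : MemLp (fun ω => (ε p' ω : ℝ)) 2 P)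
    (hZmeas : ∀ p r, Measurable (Z p r)) (hZ01 : ∀ p r ω c, Z p r ω c ≤ 1)
    (hZiid : iIndepFun (fun pr : κ × ℕ => Z pr.1 pr.2) P)
    (hZid : ∀ r, IdentDistrib (Z p r) (Z p 0) P P)
    (hZid' : ∀ r, IdentDistrib (Z p' r) (Z p' 0) P P)
    (hind : IndepFun (fun ω => (ε p ω, ε p' ω)) (fun ω (pr : κ × ℕ) => Z pr.1 pr.2 ω) P)
    (c c' : L) :
    cov[fun ω => (thinning ε Z p c ω : ℝ), fun ω => (thinning ε Z p' c' ω : ℝ); P] = 0 := by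
  have hb := lintegral_natCast_comp_of_identDistrib hZmeas hZid (measurable_pi_apply c)
    (hZ01 p 0 · c)
  have hb' := lintegral_natCast_comp_of_identDistrib hZmeas hZid' (measurable_pi_apply c')
    (hZ01 p' 0 · c')
  have hprod : ∫ ω, (thinning ε Z p c ω : ℝ) * thinning ε Z p' c' ω ∂P
      = (∫ ω, (thinning ε Z p c ω : ℝ) ∂P) * ∫ ω, (thinning ε Z p' c' ω : ℝ) ∂P := by
    rw [integral_natCast_mul_eq_toReal_lintegral (measurable_thinning hε hZmeas c)
      (measurable_thinning hε' hZmeas c'),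
      lintegral_thinning_mul_thinning_of_ne hpp' hε hε' hεind hZmeas hZiid hind hb hb',
      ENNReal.toReal_mul,
      ← lintegral_thinning hε hZmeas (hind.comp measurable_fst measurable_id) hb,
      ← lintegral_thinning hε' hZmeas (hind.comp measurable_snd measurable_id) hb',
      integral_natCast_eq_toReal_lintegral (measurable_thinning hε hZmeas c),
      integral_natCast_eq_toReal_lintegral (measurable_thinning hε' hZmeas c')]
  rw [covariance_eq_sub (memLp_thinning hε hZmeas (hZ01 p) hε2 c)
    (memLp_thinning hε' hZmeas (hZ01 p') hε2' c')]
  exact sub_eq_zero.mpr hprod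

lemma covariance_thinning_self [IsProbabilityMeasure P] {p : κ} (hε : Measurable (ε p))
    (hε2 : MemLp (fun ω => (ε p ω : ℝ)) 2 P) (hZmeas : ∀ p r, Measurable (Z p r))
    (hZ01 : ∀ r ω c, Z p r ω c ≤ 1) (hZiid : iIndepFun (fun pr : κ × ℕ => Z pr.1 pr.2) P)
    (hZid : ∀ r, IdentDistrib (Z p r) (Z p 0) P P)
    (hind : IndepFun (ε p) (fun ω (pr : κ × ℕ) => Z pr.1 pr.2 ω) P) (c c' : L) :
    cov[fun ω => (thinning ε Z p c ω : ℝ), fun ω => (thinning ε Z p c' ω : ℝ); P]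
      = (P {ω | Z p 0 ω c = 1 ∧ Z p 0 ω c' = 1}).toReal * ∫ ω, (ε p ω : ℝ) ∂P
        + (Var[fun ω => (ε p ω : ℝ); P] - ∫ ω, (ε p ω : ℝ) ∂P)
          * ((P {ω | Z p 0 ω c = 1}).toReal * (P {ω | Z p 0 ω c' = 1}).toReal) := by
  have hb := lintegral_natCast_comp_of_identDistrib hZmeas hZid (measurable_pi_apply c)
    (hZ01 0 · c)
  have hb' := lintegral_natCast_comp_of_identDistrib hZmeas hZid (measurable_pi_apply c')
    (hZ01 0 · c')
  have hγ : ∀ r, ∫⁻ ω, (Z p r ω c : ℝ≥0∞) * Z p r ω c' ∂P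
      = P {ω | Z p 0 ω c = 1 ∧ Z p 0 ω c' = 1} := by
    intro r
    have h := lintegral_natCast_comp_of_identDistrib hZmeas hZid
      (g := fun z => z c * z c') (by fun_prop)
      (fun ω => Left.mul_le_one (hZ01 0 ω c) (hZ01 0 ω c')) r
    simpa only [Nat.cast_mul, mul_eq_one] using h
  have hεint : Integrable (fun ω => (ε p ω : ℝ)) P := hε2.integrable one_le_two
  have hεpred : ∫ ω, ((ε p ω * (ε p ω - 1) : ℕ) : ℝ) ∂P
      = ∫ ω, (ε p ω : ℝ) ^ 2 ∂P - ∫ ω, (ε p ω : ℝ) ∂P := by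
    simp only [natCast_mul_pred_eq]
    exact integral_sub hε2.integrable_sq hεint
  have hεpred_ne_top : ∫⁻ ω, ((ε p ω * (ε p ω - 1) : ℕ) : ℝ≥0∞) ∂P ≠ ⊤ := by
    refine lintegral_natCast_ne_top ?_
    simp only [natCast_mul_pred_eq]
    exact hε2.integrable_sq.sub hεint
  have hprod : ∫ ω, (thinning ε Z p c ω : ℝ) * thinning ε Z p c' ω ∂P
      = (P {ω | Z p 0 ω c = 1 ∧ Z p 0 ω c' = 1}).toReal * ∫ ω, (ε p ω : ℝ) ∂P
        + (P {ω | Z p 0 ω c = 1}).toReal * (P {ω | Z p 0 ω c' = 1}).toReal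
          * (∫ ω, (ε p ω : ℝ) ^ 2 ∂P - ∫ ω, (ε p ω : ℝ) ∂P) := by
    rw [integral_natCast_mul_eq_toReal_lintegral (measurable_thinning hε hZmeas c)
      (measurable_thinning hε hZmeas c'),
      lintegral_thinning_mul_thinning_self hε hZmeas hZiid hind hb hb' hγ,
      ENNReal.toReal_add (ENNReal.mul_ne_top (measure_ne_top _ _) (lintegral_natCast_ne_top hεint))
        (ENNReal.mul_ne_top (by finiteness) hεpred_ne_top),
      ENNReal.toReal_mul, ENNReal.toReal_mul, ENNReal.toReal_mul,
      ← integral_natCast_eq_toReal_lintegral hε, ← hεpred,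
      ← integral_natCast_eq_toReal_lintegral (by fun_prop)]
  rw [covariance_eq_sub (memLp_thinning hε hZmeas hZ01 hε2 c)
      (memLp_thinning hε hZmeas hZ01 hε2 c'), Pi.mul_def, hprod,
    integral_thinning hε hZmeas hZ01 hZid hind c, integral_thinning hε hZmeas hZ01 hZid hind c',
    variance_eq_sub hε2]
  simp only [Pi.pow_apply]
  ring

lemma covariance_thinning [IsProbabilityMeasure P] [DecidableEq κ] (hε : ∀ p, Measurable (ε p))
    (hεiid : iIndepFun ε P) (hε2 : ∀ p, MemLp (fun ω => (ε p ω : ℝ)) 2 P)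
    (hZmeas : ∀ p r, Measurable (Z p r)) (hZ01 : ∀ p r ω c, Z p r ω c ≤ 1)
    (hZiid : iIndepFun (fun pr : κ × ℕ => Z pr.1 pr.2) P)
    (hZid : ∀ p r, IdentDistrib (Z p r) (Z p 0) P P)
    (hindep : IndepFun (fun ω p => ε p ω) (fun ω (pr : κ × ℕ) => Z pr.1 pr.2 ω) P)
    (p p' : κ) (c c' : L) :
    cov[fun ω => (thinning ε Z p c ω : ℝ), fun ω => (thinning ε Z p' c' ω : ℝ); P]
      = if p = p' then
          (P {ω | Z p 0 ω c = 1 ∧ Z p 0 ω c' = 1}).toReal * ∫ ω, (ε p ω : ℝ) ∂P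
            + (Var[fun ω => (ε p ω : ℝ); P] - ∫ ω, (ε p ω : ℝ) ∂P)
              * ((P {ω | Z p 0 ω c = 1}).toReal * (P {ω | Z p 0 ω c' = 1}).toReal)
        else 0 := by
  split_ifs with hpp'
  · subst hpp'
    exact covariance_thinning_self (hε p) (hε2 p) hZmeas (hZ01 p) hZiid (hZid p)
      (hindep.comp (measurable_pi_apply p) measurable_id) c c'
  · exact covariance_thinning_of_ne hpp' (hε p) (hε p') (hεiid.indepFun hpp') (hε2 p) (hε2 p')
      hZmeas hZ01 hZiid (hZid p) (hZid p')
      (hindep.comp ((measurable_pi_apply p).prodMk (measurable_pi_apply p')) measurable_id) c c'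

end Covariance

lemma sum_sum_ite_shift_eq {M : Type*} [AddCommMonoid M] (q1 q2 k l : ℕ) (s t : ℤ)
    (v : ℕ × ℕ → ℕ × ℕ → M) :
    ∑ q ∈ range (q1 + 1) ×ˢ range (q2 + 1), ∑ q' ∈ range (q1 + 1) ×ˢ range (q2 + 1),
        (if ((s - q.1, t - q.2) : ℤ × ℤ) = (s - k - q'.1, t - l - q'.2) then v q q' else 0)
      = ∑ i ∈ Icc k q1, ∑ j ∈ Icc l q2, v (i, j) (i - k, j - l) := by
  have hcond : ∀ q q' : ℕ × ℕ, (((s - q.1, t - q.2) : ℤ × ℤ) = (s - k - q'.1, t - l - q'.2))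
      ↔ q' = (q.1 - k, q.2 - l) ∧ (k ≤ q.1 ∧ l ≤ q.2) := by
    intro q q'
    simp only [Prod.ext_iff]
    omega
  simp_rw [hcond, ite_and, sum_ite_eq']
  have hfilter : ((range (q1 + 1) ×ˢ range (q2 + 1)).filter fun q => k ≤ q.1 ∧ l ≤ q.2)
      = Icc k q1 ×ˢ Icc l q2 := by
    ext q
    simp only [mem_filter, mem_product, mem_range, mem_Icc]
    omega
  rw [← sum_product' (f := fun i j => v (i, j) (i - k, j - l)), ← hfilter, sum_filter]
  refine sum_congr rfl fun q hq => ?_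
  rw [mem_product, mem_range, mem_range] at hq
  rw [if_pos (by simp only [mem_product, mem_range]; omega), ite_and]

theorem inma_autocovariance_general
    {Ω : Type*} [MeasurableSpace Ω] (P : Measure Ω) [IsProbabilityMeasure P]
    (q1 q2 : ℕ)
    (β : ℕ → ℕ → ℝ)
    (hβ : ∀ i ≤ q1, ∀ j ≤ q2, β i j ∈ Set.Icc (0 : ℝ) 1)
    -- the i.i.d. innovations, with finite mean and variance
    (ε : ℤ × ℤ → Ω → ℕ) (hεmeas : ∀ p, Measurable (ε p))
    (hεiid : iIndepFun ε P)
    (hεid : ∀ p, Measure.map (ε p) P = Measure.map (ε (0, 0)) P)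
    (hεL2 : Integrable (fun ω => ((ε (0, 0) ω : ℝ)) ^ 2) P)
    (με : ℝ) (hμε : με = ∫ ω, (ε (0, 0) ω : ℝ) ∂P)
    (σε2 : ℝ) (hσε2 : σε2 = variance (fun ω => (ε (0, 0) ω : ℝ)) P)
    -- the counting-series vectors, i.i.d., with {0,1}-valued components
    (Z : ℤ × ℤ → ℕ → Ω → ℕ × ℕ → ℕ)
    (hZmeas : ∀ p r, Measurable (Z p r))
    (hZ01 : ∀ p r ω ij, Z p r ω ij ≤ 1)
    (hZiid : iIndepFun
      (fun pr : (ℤ × ℤ) × ℕ => Z pr.1 pr.2) P)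
    (hZid : ∀ p r, Measure.map (Z p r) P = Measure.map (Z (0, 0) 0) P)
    (hZβ : ∀ p r, ∀ i ≤ q1, ∀ j ≤ q2,
      P {ω | Z p r ω (i, j) = 1} = ENNReal.ofReal (β i j))
    -- the whole thinning family is independent of the innovation family
    (hindep : IndepFun (fun ω p => ε p ω)
      (fun ω (pr : (ℤ × ℤ) × ℕ) => Z pr.1 pr.2 ω) P)
    -- the INMA(q1,q2) random field
    (X : ℤ → ℤ → Ω → ℕ)
    (hX : ∀ s t ω, X s t ω =
      ∑ i ∈ range (q1 + 1), ∑ j ∈ range (q2 + 1),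
        ∑ r ∈ range (ε (s - (i : ℤ), t - (j : ℤ)) ω),
          Z (s - (i : ℤ), t - (j : ℤ)) r ω (i, j))
    (s t : ℤ) (k l : ℕ) :
    (∫ ω, (X s t ω : ℝ) * (X (s - (k : ℤ)) (t - (l : ℤ)) ω : ℝ) ∂P)
      - (∫ ω, (X s t ω : ℝ) ∂P) * (∫ ω, (X (s - (k : ℤ)) (t - (l : ℤ)) ω : ℝ) ∂P) =
      (σε2 - με) * (∑ i ∈ Icc k q1, ∑ j ∈ Icc l q2, β i j * β (i - k) (j - l))
      + με * ∑ i ∈ Icc k q1, ∑ j ∈ Icc l q2,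
          (P {ω | Z (s - (i : ℤ), t - (j : ℤ)) 0 ω (i, j) = 1 ∧
                   Z (s - (i : ℤ), t - (j : ℤ)) 0 ω (i - k, j - l) = 1}).toReal := by
  set Q := range (q1 + 1) ×ˢ range (q2 + 1)
  have hXsum : ∀ s t, (fun ω => (X s t ω : ℝ))
      = fun ω => ∑ q ∈ Q, (thinning ε Z (s - q.1, t - q.2) q ω : ℝ) := by
    intro s t
    funext ω
    simp only [hX, Q, sum_product, thinning, Nat.cast_sum]
  have hεid' : ∀ p, IdentDistrib (fun ω => (ε p ω : ℝ)) (fun ω => (ε (0, 0) ω : ℝ)) P P :=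
    fun p => IdentDistrib.comp ⟨(hεmeas p).aemeasurable, (hεmeas _).aemeasurable, hεid p⟩
      measurable_from_top
  have hε2 : ∀ p, MemLp (fun ω => (ε p ω : ℝ)) 2 P := fun p =>
    (hεid' p).memLp_iff.mpr ((memLp_two_iff_integrable_sq (by fun_prop)).mpr hεL2)
  have hZid' : ∀ p r, IdentDistrib (Z p r) (Z p 0) P P := fun p r =>
    ⟨(hZmeas p r).aemeasurable, (hZmeas p 0).aemeasurable, (hZid p r).trans (hZid p 0).symm⟩
  have hL2 : ∀ p c, MemLp (fun ω => (thinning ε Z p c ω : ℝ)) 2 P :=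
    fun p c => memLp_thinning (hεmeas p) hZmeas (hZ01 p) (hε2 p) c
  have hXL2 : ∀ s t, MemLp (fun ω => (X s t ω : ℝ)) 2 P := fun s t =>
    hXsum s t ▸ memLp_finsetSum Q fun q _ => hL2 _ q
  have hβ' : ∀ p, ∀ q ∈ Q, (P {ω | Z p 0 ω q = 1}).toReal = β q.1 q.2 := by
    intro p q hq
    simp only [Q, mem_product, mem_range] at hq
    rw [hZβ p 0 q.1 (by omega) q.2 (by omega),
      ENNReal.toReal_ofReal (hβ _ (by omega) _ (by omega)).1]
  have hcov : ∀ q ∈ Q, ∀ q' ∈ Q,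
      cov[fun ω => (thinning ε Z (s - q.1, t - q.2) q ω : ℝ),
        fun ω => (thinning ε Z (s - k - q'.1, t - l - q'.2) q' ω : ℝ); P]
      = if ((s - q.1, t - q.2) : ℤ × ℤ) = (s - k - q'.1, t - l - q'.2) then
          (P {ω | Z (s - q.1, t - q.2) 0 ω q = 1 ∧ Z (s - q.1, t - q.2) 0 ω q' = 1}).toReal * με
            + (σε2 - με) * (β q.1 q.2 * β q'.1 q'.2)
        else 0 := by
    intro q hq q' hq'
    rw [covariance_thinning hεmeas hεiid hε2 hZmeas hZ01 hZiid hZid' hindep,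
      (hεid' _).integral_eq, (hεid' _).variance_eq, ← hμε, ← hσε2, hβ' _ q hq, hβ' _ q' hq']
  have hcovX := covariance_eq_sub (hXL2 s t) (hXL2 (s - k) (t - l))
  simp only [Pi.mul_apply] at hcovX
  rw [← hcovX, hXsum s t, hXsum (s - k) (t - l),
    covariance_fun_sum_fun_sum' (fun q _ => hL2 _ q) (fun q _ => hL2 _ q),
    sum_congr rfl fun q hq => sum_congr rfl fun q' hq' => hcov q hq q' hq', sum_sum_ite_shift_eq]
  simp only [mul_sum, ← sum_add_distrib]
  exact sum_congr rfl fun i _ => sum_congr rfl fun j _ => by ring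

/-- Theorem 1(ii): the autocovariance function of the INMA(q1,q2) random field. -/
theorem inma_autocovariance
    {Ω : Type*} [MeasurableSpace Ω] (P : Measure Ω) [IsProbabilityMeasure P]
    (q1 q2 : ℕ) (hq : 1 ≤ q1 + q2)
    (β : ℕ → ℕ → ℝ)
    (hβ : ∀ i ≤ q1, ∀ j ≤ q2, β i j ∈ Set.Icc (0 : ℝ) 1)
    -- the i.i.d. innovations, with finite mean and variance
    (ε : ℤ × ℤ → Ω → ℕ) (hεmeas : ∀ p, Measurable (ε p))
    (hεiid : iIndepFun ε P)
    (hεid : ∀ p, Measure.map (ε p) P = Measure.map (ε (0, 0)) P)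
    (hεL2 : Integrable (fun ω => ((ε (0, 0) ω : ℝ)) ^ 2) P)
    (με : ℝ) (hμε : με = ∫ ω, (ε (0, 0) ω : ℝ) ∂P)
    (σε2 : ℝ) (hσε2 : σε2 = variance (fun ω => (ε (0, 0) ω : ℝ)) P)
    -- the counting-series vectors, i.i.d., with {0,1}-valued components
    (Z : ℤ × ℤ → ℕ → Ω → ℕ × ℕ → ℕ)
    (hZmeas : ∀ p r, Measurable (Z p r))
    (hZ01 : ∀ p r ω ij, Z p r ω ij ≤ 1)
    (hZiid : iIndepFun
      (fun pr : (ℤ × ℤ) × ℕ => Z pr.1 pr.2) P)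
    (hZid : ∀ p r, Measure.map (Z p r) P = Measure.map (Z (0, 0) 0) P)
    (hZβ : ∀ p r, ∀ i ≤ q1, ∀ j ≤ q2,
      P {ω | Z p r ω (i, j) = 1} = ENNReal.ofReal (β i j))
    -- the whole thinning family is independent of the innovation family
    (hindep : IndepFun (fun ω p => ε p ω)
      (fun ω (pr : (ℤ × ℤ) × ℕ) => Z pr.1 pr.2 ω) P)
    -- the INMA(q1,q2) random field
    (X : ℤ → ℤ → Ω → ℕ)
    (hX : ∀ s t ω, X s t ω =
      ∑ i ∈ range (q1 + 1), ∑ j ∈ range (q2 + 1),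
        ∑ r ∈ range (ε (s - (i : ℤ), t - (j : ℤ)) ω),
          Z (s - (i : ℤ), t - (j : ℤ)) r ω (i, j))
    (s t : ℤ) (k l : ℕ) (hk : k ≤ q1) (hl : l ≤ q2) :
    (∫ ω, (X s t ω : ℝ) * (X (s - (k : ℤ)) (t - (l : ℤ)) ω : ℝ) ∂P)
      - (∫ ω, (X s t ω : ℝ) ∂P) * (∫ ω, (X (s - (k : ℤ)) (t - (l : ℤ)) ω : ℝ) ∂P) =
      (σε2 - με) * (∑ i ∈ Icc k q1, ∑ j ∈ Icc l q2, β i j * β (i - k) (j - l))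
      + με * ∑ i ∈ Icc k q1, ∑ j ∈ Icc l q2,
          (P {ω | Z (s - (i : ℤ), t - (j : ℤ)) 0 ω (i, j) = 1 ∧
                   Z (s - (i : ℤ), t - (j : ℤ)) 0 ω (i - k, j - l) = 1}).toReal :=
  inma_autocovariance_general P q1 q2 β hβ ε hεmeas hεiid hεid hεL2 με hμε σε2 hσε2 Z hZmeas hZ01
    hZiid hZid hZβ hindep X hX s t k l
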